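/- Let k(x,x') = ∑_{j=1}^∞ λ_j φ_j(x)φ_j(x') be a Mercer expansion with λ_j ≥ 0 and let φ̄_j = sup_x |φ_j(x)| be finite with ∑ λ_j φ̄_j² < ∞. Then for any m and any points x₁,...,x_t, the trace of the Nyström error matrix E = K_{X,X} - K_{Z,X}ᵀ K_{Z,Z}^{-1} K_{Z,X}, when the inducing features are the first m eigenfunctions, satisfies Tr(E) ≤ t · ∑_{j=m+1}^∞ λ_j φ̄_j², with the pointwise identity E_{ii} = ∑_{j=m+1}^∞ λ_j φ_j(x_i)². -/

import Mathlib

open Matrix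

/-!
Since `K_{ZZ}` is the diagonal matrix of the first `m` eigenvalues and `K_{ZX}` has entries
`λ_i φ_i(x_a)`, the low-rank part `K_{ZX}ᵀ K_{ZZ}⁻¹ K_{ZX}` is exactly the truncation
`∑_{i<m} λ_i φ_i(x_a) φ_i(x_b)` of the Mercer series. Hence every entry of `E` is the tail of that
series, and on the diagonal each term of the tail is bounded by `λ_j φ̄_j²`.
-/

theorem Matrix.inv_diagonal_of_ne_zero {n K : Type*} [Fintype n] [DecidableEq n] [Field K]
    {v : n → K} (hv : ∀ i, v i ≠ 0) : (diagonal v)⁻¹ = diagonal fun i => (v i)⁻¹ := by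
  refine inv_eq_right_inv ?_
  rw [diagonal_mul_diagonal, ← diagonal_one]
  exact congrArg diagonal (funext fun i => mul_inv_cancel₀ (hv i))

theorem Matrix.transpose_mul_inv_diagonal_mul_apply {ι n K : Type*} [Fintype ι] [DecidableEq ι]
    [Field K] {v : ι → K} (hv : ∀ i, v i ≠ 0) {ψ A : Matrix ι n K}
    (hA : ∀ i a, A i a = v i * ψ i a) (a b : n) :
    (Aᵀ * (diagonal v)⁻¹ * A) a b = ∑ i, v i * ψ i a * ψ i b := by
  rw [inv_diagonal_of_ne_zero hv, Matrix.mul_assoc, mul_apply]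
  refine Finset.sum_congr rfl fun i _ => ?_
  rw [diagonal_mul, transpose_apply, hA, hA]
  field_simp [hv i]

theorem tsum_sub_sum_fin_eq_tsum_nat_add {G : Type*} [AddCommGroup G] [TopologicalSpace G]
    [IsTopologicalAddGroup G] [T2Space G] {f : ℕ → G} (hf : Summable f) (m : ℕ) :
    ∑' j, f j - ∑ i : Fin m, f i = ∑' j, f (m + j) := by
  rw [Fin.sum_univ_eq_sum_range (fun i => f i), ← hf.sum_add_tsum_nat_add m, add_sub_cancel_left]
  simp only [add_comm]

theorem mul_sq_le_mul_sq_of_abs_le {a b c : ℝ} (ha : 0 ≤ a) (h : |b| ≤ c) : a * b ^ 2 ≤ a * c ^ 2 :=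
  mul_le_mul_of_nonneg_left (sq_le_sq' (abs_le.1 h).1 (abs_le.1 h).2) ha

theorem summable_mul_sq_of_abs_le {ι : Type*} {lam f c : ι → ℝ} (hlam : ∀ j, 0 ≤ lam j)
    (hf : ∀ j, |f j| ≤ c j) (hsum : Summable fun j => lam j * c j ^ 2) :
    Summable fun j => lam j * f j ^ 2 :=
  hsum.of_nonneg_of_le (fun j => mul_nonneg (hlam j) (sq_nonneg _))
    (fun j => mul_sq_le_mul_sq_of_abs_le (hlam j) (hf j))

theorem tsum_mul_sq_le_of_abs_le {ι : Type*} {lam f c : ι → ℝ} (hlam : ∀ j, 0 ≤ lam j)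
    (hf : ∀ j, |f j| ≤ c j) (hsum : Summable fun j => lam j * c j ^ 2) :
    ∑' j, lam j * f j ^ 2 ≤ ∑' j, lam j * c j ^ 2 :=
  (summable_mul_sq_of_abs_le hlam hf hsum).tsum_le_tsum
    (fun j => mul_sq_le_mul_sq_of_abs_le (hlam j) (hf j)) hsum

/-- Nyström error for inducing-feature approximations: with a Mercer expansion
k(x,x') = ∑_j λ_j φ_j(x)φ_j(x') and inducing features the first m eigenfunctions,
the error matrix E = K_{XX} - K_{ZX}ᵀ K_{ZZ}⁻¹ K_{ZX} satisfies
E_{aa} = ∑_{j>m} λ_j φ_j(x_a)² and Tr(E) ≤ t·∑_{j>m} λ_j φ̄_j². -/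
theorem nystrom_trace_bound {X : Type*} (k : X → X → ℝ)
    (lam : ℕ → ℝ) (φ : ℕ → X → ℝ) (φb : ℕ → ℝ)
    (hlam : ∀ j, 0 ≤ lam j)
    (hφb : ∀ j x, |φ j x| ≤ φb j)
    (hsum : Summable fun j => lam j * (φb j) ^ 2)
    (hk : ∀ x x', k x x' = ∑' j : ℕ, lam j * φ j x * φ j x')
    (m t : ℕ) (hmpos : ∀ j < m, 0 < lam j) (x : Fin t → X) :
    let KXX : Matrix (Fin t) (Fin t) ℝ := fun a b => k (x a) (x b)
    let KZX : Matrix (Fin m) (Fin t) ℝ := fun i a => lam i * φ i (x a)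
    let KZZ : Matrix (Fin m) (Fin m) ℝ := Matrix.diagonal fun i : Fin m => lam i
    let E : Matrix (Fin t) (Fin t) ℝ := KXX - KZXᵀ * KZZ⁻¹ * KZX
    (∀ a : Fin t, E a a = ∑' j : ℕ, lam (m + j) * (φ (m + j) (x a)) ^ 2) ∧
      Matrix.trace E ≤ (t : ℝ) * ∑' j : ℕ, lam (m + j) * (φb (m + j)) ^ 2 := by
  intro KXX KZX KZZ E
  have hlow (a : Fin t) : (KZXᵀ * KZZ⁻¹ * KZX) a a = ∑ i : Fin m, lam i * φ i (x a) ^ 2 := by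
    rw [transpose_mul_inv_diagonal_mul_apply (v := fun i : Fin m => lam i)
      (fun i => (hmpos i i.isLt).ne') (ψ := fun i a => φ i (x a)) (fun _ _ => rfl)]
    simp only [mul_assoc, sq]
  have hdiag (a : Fin t) : E a a = ∑' j, lam (m + j) * φ (m + j) (x a) ^ 2 := by
    have hs := summable_mul_sq_of_abs_le hlam (hφb · (x a)) hsum
    show KXX a a - (KZXᵀ * KZZ⁻¹ * KZX) a a = _
    rw [hlow, ← tsum_sub_sum_fin_eq_tsum_nat_add hs]
    simp only [KXX, hk, mul_assoc, sq]
  refine ⟨hdiag, ?_⟩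
  have htail := hsum.comp_injective (add_right_injective m)
  calc trace E = ∑ a, E a a := rfl
    _ ≤ ∑ _a : Fin t, ∑' j, lam (m + j) * φb (m + j) ^ 2 := Finset.sum_le_sum fun a _ =>
        (hdiag a).trans_le (tsum_mul_sq_le_of_abs_le (fun _ => hlam _) (fun _ => hφb _ _) htail)
    _ = t * ∑' j, lam (m + j) * φb (m + j) ^ 2 := by simp
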